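/- arXiv:2110.01858 — 2 statements merged into one kernel-verified Lean document; each statement's English description precedes it below -/
import Mathlib

section
/- Let E be a real inner product space, and let f : E → ℝ be convex and differentiable with gradient ∇f that is L-Lipschitz for some L > 0. Then for all x, y ∈ E the gradient is co-coercive: ⟨∇f(y) − ∇f(x), y − x⟩ ≥ (1/L)‖∇f(y) − ∇f(x)‖². -/
/-!
Subtracting the linear function `⟪∇f x, ·⟫` from `f` leaves a convex function with gradient
`∇f - ∇f x`, hence minimised at `x`. The descent lemma
`f z ≤ f y + ⟪∇f y, z - y⟫ + L / 2 * ‖z - y‖ ^ 2`, evaluated at the gradient step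
`z = y - L⁻¹ • ∇f y`, bounds that minimum and gives
`f x + ⟪∇f x, y - x⟫ + ‖∇f y - ∇f x‖ ^ 2 / (2 * L) ≤ f y`.
Adding this to the same inequality with `x` and `y` exchanged yields co-coercivity.
-/

open RealInnerProductSpace Set

section

variable {E : Type*} [NormedAddCommGroup E] [InnerProductSpace ℝ E] [CompleteSpace E]
  {f : E → ℝ} {g : E → E}

theorem HasGradientAt.hasDerivAt_comp_add_smul {a x v : E} {t : ℝ}
    (hf : HasGradientAt f a (x + t • v)) :
    HasDerivAt (fun s : ℝ => f (x + s • v)) ⟪a, v⟫ t := by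
  have hline : HasDerivAt (fun s : ℝ => x + s • v) v t := by
    simpa using ((hasDerivAt_id t).smul_const v).const_add x
  have := hf.hasFDerivAt.comp_hasDerivAt t hline
  rwa [InnerProductSpace.toDual_apply_apply] at this

theorem HasGradientAt.sub_inner {a x : E} (b : E) (hf : HasGradientAt f a x) :
    HasGradientAt (fun z => f z - ⟪b, z⟫) (a - b) x := by
  rw [hasGradientAt_iff_hasFDerivAt, map_sub]
  exact hf.hasFDerivAt.sub (InnerProductSpace.toDual ℝ E b).hasFDerivAt

theorem ConvexOn.add_inner_le_of_hasGradientAt {s : Set E} {a x y : E} (hf : ConvexOn ℝ s f)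
    (hx : x ∈ s) (hy : y ∈ s) (hfx : HasGradientAt f a x) : f x + ⟪a, y - x⟫ ≤ f y := by
  have hline : ConvexOn ℝ (AffineMap.lineMap x y ⁻¹' s) (fun t : ℝ => f (x + t • (y - x))) := by
    simpa [Function.comp_def, AffineMap.lineMap_apply_module', add_comm]
      using hf.comp_affineMap (AffineMap.lineMap x y)
  have hderiv : HasDerivAt (fun t : ℝ => f (x + t • (y - x))) ⟪a, y - x⟫ 0 :=
    HasGradientAt.hasDerivAt_comp_add_smul (by simpa using hfx)
  have hslope := hline.le_slope_of_hasDerivAt (x := 0) (y := 1) (by simpa using hx)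
    (by simpa using hy) one_pos hderiv
  simp only [slope_def_field, zero_smul, add_zero, one_smul, add_sub_cancel, sub_zero,
    div_one] at hslope
  linarith

theorem le_add_inner_add_norm_sq_of_hasGradientAt {L : ℝ} {x y : E}
    (hf : ∀ z, HasGradientAt f (g z) z) (hg : ∀ z, ‖g z - g x‖ ≤ L * ‖z - x‖) :
    f y ≤ f x + ⟪g x, y - x⟫ + L / 2 * ‖y - x‖ ^ 2 := by
  set v := y - x
  set φ : ℝ → ℝ := fun t => f (x + t • v) - t * ⟪g x, v⟫ - L / 2 * t ^ 2 * ‖v‖ ^ 2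
  have hφ : ∀ t, HasDerivAt φ (⟪g (x + t • v), v⟫ - ⟪g x, v⟫ - L * t * ‖v‖ ^ 2) t := by
    intro t
    have := (((hf (x + t • v)).hasDerivAt_comp_add_smul).sub
      ((hasDerivAt_id t).mul_const ⟪g x, v⟫)).sub
      (((hasDerivAt_pow 2 t).const_mul (L / 2)).mul_const (‖v‖ ^ 2))
    exact this.congr_deriv (by
      simp only [one_mul, Nat.cast_ofNat, Nat.add_one_sub_one, pow_one]; ring)
  have hφ_nonpos : ∀ t ∈ interior (Ici (0 : ℝ)),
      ⟪g (x + t • v), v⟫ - ⟪g x, v⟫ - L * t * ‖v‖ ^ 2 ≤ 0 := by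
    intro t ht
    rw [interior_Ici, mem_Ioi] at ht
    have := calc ⟪g (x + t • v), v⟫ - ⟪g x, v⟫ = ⟪g (x + t • v) - g x, v⟫ :=
          (inner_sub_left ..).symm
      _ ≤ ‖g (x + t • v) - g x‖ * ‖v‖ := real_inner_le_norm _ _
      _ ≤ L * ‖x + t • v - x‖ * ‖v‖ := by gcongr; exact hg _
      _ = L * t * ‖v‖ ^ 2 := by
        rw [add_sub_cancel_left, norm_smul, Real.norm_of_nonneg ht.le]; ring
    linarith
  have hanti : AntitoneOn φ (Ici 0) :=
    antitoneOn_of_hasDerivWithinAt_nonpos (convex_Ici 0)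
      (fun t _ => (hφ t).continuousAt.continuousWithinAt) (fun t _ => (hφ t).hasDerivWithinAt)
      hφ_nonpos
  have hφ01 := hanti self_mem_Ici (mem_Ici.2 zero_le_one) zero_le_one
  simp only [φ, zero_smul, add_zero, one_smul, v, add_sub_cancel] at hφ01
  linarith

theorem IsMinOn.le_sub_norm_sq_of_hasGradientAt {L : ℝ} {x y : E} (hmin : IsMinOn f univ x)
    (hf : ∀ z, HasGradientAt f (g z) z) (hg : ∀ z, ‖g z - g y‖ ≤ L * ‖z - y‖) :
    f x ≤ f y - 1 / (2 * L) * ‖g y‖ ^ 2 := by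
  set z := y - L⁻¹ • g y
  have hdescent := le_add_inner_add_norm_sq_of_hasGradientAt (y := z) hf hg
  have hstep : z - y = -(L⁻¹ • g y) := by simp [z]
  rw [hstep, inner_neg_right, real_inner_smul_right, real_inner_self_eq_norm_sq, norm_neg,
    norm_smul, mul_pow, Real.norm_eq_abs, sq_abs] at hdescent
  calc f x ≤ f z := isMinOn_univ_iff.mp hmin z
    _ ≤ _ := hdescent
    _ = f y - 1 / (2 * L) * ‖g y‖ ^ 2 := by
      -- for `L = 0` both sides reduce to `f y`, since `0⁻¹ = 0`
      rcases eq_or_ne L 0 with rfl | hL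
      · simp
      · field_simp; ring

theorem ConvexOn.add_inner_add_norm_sq_le {L : ℝ} (hconv : ConvexOn ℝ univ f)
    (hf : ∀ z, HasGradientAt f (g z) z) (hg : ∀ z w, ‖g z - g w‖ ≤ L * ‖z - w‖) (x y : E) :
    f x + ⟪g x, y - x⟫ + 1 / (2 * L) * ‖g y - g x‖ ^ 2 ≤ f y := by
  set F := fun z => f z - ⟪g x, z⟫
  have hF : ∀ z, HasGradientAt F (g z - g x) z := fun z => (hf z).sub_inner (g x)
  have hFconv : ConvexOn ℝ univ F :=
    hconv.sub ((InnerProductSpace.toDual ℝ E (g x)).toLinearMap.concaveOn convex_univ)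
  have hmin : IsMinOn F univ x := isMinOn_univ_iff.mpr fun z => by
    simpa using hFconv.add_inner_le_of_hasGradientAt (mem_univ x) (mem_univ z) (hF x)
  have hbound := hmin.le_sub_norm_sq_of_hasGradientAt (y := y) hF fun z => by
    simpa only [sub_sub_sub_cancel_right] using hg z y
  simp only [F, inner_sub_right] at hbound ⊢
  linarith

end

theorem gradient_cocoercive_general {E : Type*} [NormedAddCommGroup E] [InnerProductSpace ℝ E]
    [CompleteSpace E] (f : E → ℝ) (g : E → E) (L : ℝ)
    (hconv : ConvexOn ℝ Set.univ f)
    (hdiff : ∀ x, HasGradientAt f (g x) x)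
    (hlip : ∀ x y, ‖g x - g y‖ ≤ L * ‖x - y‖) :
    ∀ x y, (1 / L) * ‖g y - g x‖ ^ 2 ≤ ⟪g y - g x, y - x⟫ := by
  intro x y
  have hxy := hconv.add_inner_add_norm_sq_le hdiff hlip x y
  have hyx := hconv.add_inner_add_norm_sq_le hdiff hlip y x
  rw [norm_sub_rev, ← neg_sub y x, inner_neg_right] at hyx
  rw [inner_sub_left, show 1 / L = 1 / (2 * L) + 1 / (2 * L) by ring, add_mul]
  linarith

/-- Co-coercivity of the gradient of a convex function with `L`-Lipschitz gradient:
`⟪∇f y - ∇f x, y - x⟫ ≥ (1/L) ‖∇f y - ∇f x‖²`. -/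
theorem gradient_cocoercive {E : Type*} [NormedAddCommGroup E] [InnerProductSpace ℝ E]
    [CompleteSpace E] (f : E → ℝ) (g : E → E) (L : ℝ) (hL : 0 < L)
    (hconv : ConvexOn ℝ Set.univ f)
    (hdiff : ∀ x, HasGradientAt f (g x) x)
    (hlip : ∀ x y, ‖g x - g y‖ ≤ L * ‖x - y‖) :
    ∀ x y, (1 / L) * ‖g y - g x‖ ^ 2 ≤ ⟪g y - g x, y - x⟫ :=
  gradient_cocoercive_general f g L hconv hdiff hlip
end

section
/- Let E be a real inner product space, and let f : E → ℝ be convex and differentiable with gradient ∇f that is L-Lipschitz for some L > 0. Suppose x* is a global minimizer of f (f(x*) ≤ f(y) for all y). Let the gradient descent iterates be x⁽ᵏ⁺¹⁾ = x⁽ᵏ⁾ − (1/L)·∇f(x⁽ᵏ⁾) starting from an arbitrary x⁽⁰⁾. Then for every t ∈ ℕ: f(x⁽ᵗ⁺¹⁾) − f(x*) ≤ 2L·‖x⁽⁰⁾ − x*‖²/(t+1). -/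
open RealInnerProductSpace

/-!
Smoothness gives the descent lemma `f (z + v) ≤ f z + ⟪∇f z, v⟫ + L/2 ‖v‖²`, so a step of length
`1/L` decreases `f` by at least `‖∇f z‖² / (2L)`. Combined with the first-order convexity
inequality at `z` this bounds the new gap `f z⁺ - f y` by `L/2 (‖z - y‖² - ‖z⁺ - y‖²)`. These
bounds telescope, and since the gaps decrease, `t + 1` times the last one is at most
`L/2 ‖x⁽⁰⁾ - y‖²`.
-/

theorem image_one_le_of_hasDerivAt_le_add_mul {φ φ' : ℝ → ℝ} {C : ℝ}
    (hφ : ∀ s, HasDerivAt φ (φ' s) s) (hφ' : ∀ s ∈ Set.Ioo (0 : ℝ) 1, φ' s ≤ φ' 0 + C * s) :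
    φ 1 ≤ φ 0 + φ' 0 + C / 2 := by
  set ψ : ℝ → ℝ := fun s => φ s - s * φ' 0 - C / 2 * s ^ 2
  have hψ (s : ℝ) : HasDerivAt ψ (φ' s - φ' 0 - C * s) s :=
    (((hφ s).sub ((hasDerivAt_id' s).mul_const (φ' 0))).sub
      ((hasDerivAt_pow 2 s).const_mul (C / 2))).congr_deriv (by push_cast; ring)
  have hanti : AntitoneOn ψ (Set.Icc 0 1) := by
    refine antitoneOn_of_hasDerivWithinAt_nonpos (convex_Icc 0 1)
      (fun s _ => (hψ s).continuousAt.continuousWithinAt) (fun s _ => (hψ s).hasDerivWithinAt)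
      fun s hs => ?_
    rw [interior_Icc] at hs
    linarith [hφ' s hs]
  have := hanti (Set.left_mem_Icc.2 zero_le_one) (Set.right_mem_Icc.2 zero_le_one) zero_le_one
  simp only [ψ] at this
  linarith

section Gradient

variable {E : Type*} [NormedAddCommGroup E] [InnerProductSpace ℝ E] [CompleteSpace E]
  {f : E → ℝ} {g : E → E} {L : ℝ}

theorem HasGradientAt.hasDerivAt_add_smul {f' z v : E} {s : ℝ}
    (hf : HasGradientAt f f' (z + s • v)) :
    HasDerivAt (fun s : ℝ => f (z + s • v)) ⟪f', v⟫ s := by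
  have hline : HasDerivAt (fun s : ℝ => z + s • v) v s := by
    simpa using ((hasDerivAt_id s).smul_const v).const_add z
  have := hf.hasFDerivAt.comp_hasDerivAt s hline
  simp only [InnerProductSpace.toDual_apply_apply] at this
  exact this

theorem ConvexOn.add_inner_le_of_hasGradientAt_s8 (hconv : ConvexOn ℝ Set.univ f) {f' z : E}
    (hf : HasGradientAt f f' z) (y : E) : f z + ⟪f', y - z⟫ ≤ f y := by
  have hline : ConvexOn ℝ Set.univ fun s : ℝ => f (z + s • (y - z)) := by
    have hcomp : (fun s : ℝ => f (z + s • (y - z))) = f ∘ AffineMap.lineMap z y := by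
      funext s
      simp [AffineMap.lineMap_apply, add_comm]
    simpa [hcomp] using hconv.comp_affineMap (AffineMap.lineMap z y)
  have hderiv : HasDerivAt (fun s : ℝ => f (z + s • (y - z))) ⟪f', y - z⟫ 0 :=
    (by rwa [zero_smul, add_zero] : HasGradientAt f f' (z + (0 : ℝ) • (y - z))).hasDerivAt_add_smul
  have hslope := hline.le_slope_of_hasDerivAt (Set.mem_univ 0) (Set.mem_univ 1) one_pos hderiv
  simp only [slope_def_field, zero_smul, add_zero, one_smul, add_sub_cancel, sub_zero,
    div_one] at hslope
  linarith

theorem le_add_inner_add_of_lipschitz_gradient (hg : ∀ z, HasGradientAt f (g z) z)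
    (hlip : ∀ z w, ‖g z - g w‖ ≤ L * ‖z - w‖) (z v : E) :
    f (z + v) ≤ f z + ⟪g z, v⟫ + L / 2 * ‖v‖ ^ 2 := by
  have hφ (s : ℝ) := (hg (z + s • v)).hasDerivAt_add_smul
  have hφ' : ∀ s ∈ Set.Ioo (0 : ℝ) 1,
      ⟪g (z + s • v), v⟫ ≤ ⟪g (z + (0 : ℝ) • v), v⟫ + L * ‖v‖ ^ 2 * s := by
    intro s hs
    have hlip_s : ‖g (z + s • v) - g z‖ ≤ L * (s * ‖v‖) := by
      simpa [norm_smul, abs_of_pos hs.1] using hlip (z + s • v) z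
    have := real_inner_le_norm (g (z + s • v) - g z) v
    rw [inner_sub_left] at this
    simp only [zero_smul, add_zero]
    nlinarith [mul_le_mul_of_nonneg_right hlip_s (norm_nonneg v)]
  have := image_one_le_of_hasDerivAt_le_add_mul hφ hφ'
  simp only [zero_smul, add_zero, one_smul] at this
  linarith

variable (hg : ∀ z, HasGradientAt f (g z) z) (hlip : ∀ z w, ‖g z - g w‖ ≤ L * ‖z - w‖)
include hg hlip

theorem le_sub_of_gradient_step (hL : L ≠ 0) (z : E) :
    f (z - (1 / L) • g z) ≤ f z - 1 / (2 * L) * ‖g z‖ ^ 2 := by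
  have := le_add_inner_add_of_lipschitz_gradient hg hlip z (-(1 / L) • g z)
  rw [neg_smul, ← sub_eq_add_neg, inner_neg_right, real_inner_smul_right,
    real_inner_self_eq_norm_sq, norm_neg, norm_smul, mul_pow, Real.norm_eq_abs, sq_abs] at this
  convert this using 1
  field_simp
  ring

theorem sub_le_of_gradient_step (hconv : ConvexOn ℝ Set.univ f) (hL : L ≠ 0) (z y : E) :
    f (z - (1 / L) • g z) - f y ≤
      L / 2 * (‖z - y‖ ^ 2 - ‖z - (1 / L) • g z - y‖ ^ 2) := by
  have hdecrease := le_sub_of_gradient_step hg hlip hL z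
  have hfirst := hconv.add_inner_le_of_hasGradientAt_s8 (hg z) y
  have hexpand : ‖z - (1 / L) • g z - y‖ ^ 2 =
      ‖z - y‖ ^ 2 - 2 * (1 / L) * ⟪g z, z - y⟫ + (1 / L) ^ 2 * ‖g z‖ ^ 2 := by
    rw [sub_right_comm, norm_sub_sq_real, real_inner_smul_right, norm_smul, mul_pow,
      Real.norm_eq_abs, sq_abs, real_inner_comm]
    ring
  have hinner : ⟪g z, y - z⟫ = -⟪g z, z - y⟫ := by rw [← inner_neg_right, neg_sub]
  have hgap : L / 2 * (‖z - y‖ ^ 2 - ‖z - (1 / L) • g z - y‖ ^ 2) =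
      ⟪g z, z - y⟫ - 1 / (2 * L) * ‖g z‖ ^ 2 := by
    rw [hexpand]
    field_simp
    ring
  linarith

end Gradient
theorem Antitone.add_one_mul_le_of_le_sub {a d : ℕ → ℝ} (ha : Antitone a)
    (had : ∀ k, a k ≤ d k - d (k + 1)) (hd : ∀ k, 0 ≤ d k) (t : ℕ) :
    ((t : ℝ) + 1) * a t ≤ d 0 :=
  calc ((t : ℝ) + 1) * a t ≤ ∑ k ∈ Finset.range (t + 1), a k := by
        simpa using Finset.card_nsmul_le_sum (Finset.range (t + 1)) a (a t)
          fun k hk => ha (Nat.lt_succ_iff.1 (Finset.mem_range.1 hk))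
    _ ≤ ∑ k ∈ Finset.range (t + 1), (d k - d (k + 1)) := Finset.sum_le_sum fun k _ => had k
    _ = d 0 - d (t + 1) := Finset.sum_range_sub' d (t + 1)
    _ ≤ d 0 := sub_le_self _ (hd _)

theorem gradient_descent_convex_rate_general {E : Type*} [NormedAddCommGroup E]
    [InnerProductSpace ℝ E] [CompleteSpace E] (f : E → ℝ) (g : E → E)
    (L : ℝ) (hL : 0 < L)
    (hconv : ConvexOn ℝ Set.univ f)
    (hdiff : ∀ z, HasGradientAt f (g z) z)
    (hlip : ∀ z w, ‖g z - g w‖ ≤ L * ‖z - w‖)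
    (xstar : E)
    (x : ℕ → E) (hiter : ∀ k, x (k + 1) = x k - (1 / L) • g (x k)) :
    ∀ t : ℕ, f (x (t + 1)) - f xstar ≤ 2 * L * ‖x 0 - xstar‖ ^ 2 / ((t : ℝ) + 1) := by
  intro t
  have hdecreasing : Antitone fun k => f (x (k + 1)) - f xstar := by
    refine antitone_nat_of_succ_le fun k => ?_
    have := le_sub_of_gradient_step hdiff hlip hL.ne' (x (k + 1))
    rw [← hiter] at this
    linarith [show 0 ≤ 1 / (2 * L) * ‖g (x (k + 1))‖ ^ 2 by positivity]
  have hrate := hdecreasing.add_one_mul_le_of_le_sub (d := fun k => L / 2 * ‖x k - xstar‖ ^ 2)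
    (fun k => by
      simpa only [hiter k, mul_sub] using sub_le_of_gradient_step hdiff hlip hconv hL.ne' (x k) xstar)
    (fun k => by positivity) t
  rw [le_div_iff₀ (by positivity)]
  nlinarith [sq_nonneg ‖x 0 - xstar‖]

/-- Convergence rate of gradient descent for convex functions:
`f x⁽ᵗ⁺¹⁾ - f x* ≤ 2L ‖x⁽⁰⁾ - x*‖² / (t+1)`. -/
theorem gradient_descent_convex_rate {E : Type*} [NormedAddCommGroup E]
    [InnerProductSpace ℝ E] [CompleteSpace E] (f : E → ℝ) (g : E → E)
    (L : ℝ) (hL : 0 < L)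
    (hconv : ConvexOn ℝ Set.univ f)
    (hdiff : ∀ z, HasGradientAt f (g z) z)
    (hlip : ∀ z w, ‖g z - g w‖ ≤ L * ‖z - w‖)
    (xstar : E) (hmin : ∀ y, f xstar ≤ f y)
    (x : ℕ → E) (hiter : ∀ k, x (k + 1) = x k - (1 / L) • g (x k)) :
    ∀ t : ℕ, f (x (t + 1)) - f xstar ≤ 2 * L * ‖x 0 - xstar‖ ^ 2 / ((t : ℝ) + 1) :=
  gradient_descent_convex_rate_general f g L hL hconv hdiff hlip xstar x hiter
end
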